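/- Let K be a field and E, E' finite-dimensional K-vector spaces. Let ĩ : T(E ⊗ E') → T(E) ⊗ T(E') be the unique homomorphism of unital K-algebras from the tensor algebra of E ⊗ E' to the algebra tensor product T(E) ⊗ T(E') satisfying ĩ(e ⊗ e') = ι(e) ⊗ ι(e') for all e ∈ E, e' ∈ E', where ι denotes the canonical inclusion of a vector space into its tensor algebra. Then ĩ is injective, and its image equals the subalgebra ⊕_{n≥0} E^⊗n ⊗ E'^⊗n of T(E) ⊗ T(E'), i.e. the sum over n of the images of the canonical maps E^⊗n ⊗ E'^⊗n → T(E) ⊗ T(E'). -/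

import Mathlib

open TensorProduct
open scoped DirectSum

/-- The canonical algebra homomorphism `ĩ : T(E ⊗ E') → T(E) ⊗ T(E')` determined by
`ĩ(e ⊗ e') = ι(e) ⊗ ι(e')`. -/
noncomputable def tildeI (K : Type*) [CommRing K] (E E' : Type*)
    [AddCommGroup E] [Module K E] [AddCommGroup E'] [Module K E'] :
    TensorAlgebra K (E ⊗[K] E') →ₐ[K] TensorAlgebra K E ⊗[K] TensorAlgebra K E' :=
  TensorAlgebra.lift K
    (TensorProduct.map (TensorAlgebra.ι K) (TensorAlgebra.ι K))

namespace Statement2Aux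

variable (K : Type*) [Field K] (E E' : Type*)
    [AddCommGroup E] [Module K E] [AddCommGroup E'] [Module K E']

/-- The "unshuffle" map `(⨂ⁿE) ⊗ (⨂ⁿE') → ⨂ⁿ(E ⊗ E')`. -/
noncomputable def tau (n : ℕ) :
    ((⨂[K]^n E) ⊗[K] (⨂[K]^n E')) →ₗ[K] ⨂[K]^n (E ⊗[K] E') :=
  TensorProduct.lift (PiTensorProduct.map₂ fun _ => TensorProduct.mk K E E')

lemma tau_tmul (n : ℕ) (x : Fin n → E) (y : Fin n → E') :
    tau K E E' n (PiTensorProduct.tprod K x ⊗ₜ[K] PiTensorProduct.tprod K y)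
      = PiTensorProduct.tprod K (fun i => x i ⊗ₜ[K] y i) := by
  simp [tau, PiTensorProduct.map₂_tprod_tprod]

lemma listprod_tmul {A B : Type*} [Semiring A] [Semiring B] [Algebra K A] [Algebra K B]
    (n : ℕ) (a : Fin n → A) (b : Fin n → B) :
    (List.ofFn fun i => (a i ⊗ₜ[K] b i : A ⊗[K] B)).prod
      = (List.ofFn a).prod ⊗ₜ[K] (List.ofFn b).prod := by
  induction n with
  | zero => simp [Algebra.TensorProduct.one_def]
  | succ n ih =>
    simp only [List.ofFn_succ, List.prod_cons, ih]
    rw [Algebra.TensorProduct.tmul_mul_tmul]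

lemma toDirectSum_toTensorAlgebra (n : ℕ) (x : ⨂[K]^n E) :
    TensorAlgebra.toDirectSum (TensorPower.toTensorAlgebra x)
      = DirectSum.of (fun k => ⨂[K]^k E) n x := by
  have h : (TensorAlgebra.toDirectSum.toLinearMap ∘ₗ
      (TensorPower.toTensorAlgebra : ⨂[K]^n E →ₗ[K] TensorAlgebra K E))
      = DirectSum.lof K ℕ (fun k => ⨂[K]^k E) n := by
    apply PiTensorProduct.ext
    ext f
    simp only [LinearMap.compMultilinearMap_apply, LinearMap.comp_apply,
      AlgHom.toLinearMap_apply, TensorPower.toTensorAlgebra_tprod,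
      TensorAlgebra.toDirectSum_tensorPower_tprod, DirectSum.lof_eq_of]
  have := LinearMap.congr_fun h x
  simpa [DirectSum.lof_eq_of] using this

lemma toTA_inj (n : ℕ) :
    Function.Injective
      (TensorPower.toTensorAlgebra : ⨂[K]^n E →ₗ[K] TensorAlgebra K E) := by
  intro a b h
  have h2 := congrArg TensorAlgebra.toDirectSum h
  rw [toDirectSum_toTensorAlgebra, toDirectSum_toTensorAlgebra] at h2
  exact DirectSum.of_injective n h2

lemma tildeI_ι (z : E ⊗[K] E') :
    tildeI K E E' (TensorAlgebra.ι K z)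
      = TensorProduct.map (TensorAlgebra.ι K) (TensorAlgebra.ι K) z :=
  TensorAlgebra.lift_ι_apply _ _

/-- Key identity (A): `tildeI ∘ toTensorAlgebra ∘ τₙ = map toTA toTA`. -/
lemma key (n : ℕ) :
    (tildeI K E E').toLinearMap ∘ₗ
        (TensorPower.toTensorAlgebra :
          ⨂[K]^n (E ⊗[K] E') →ₗ[K] TensorAlgebra K (E ⊗[K] E')) ∘ₗ tau K E E' n
      = TensorProduct.map
          (TensorPower.toTensorAlgebra : ⨂[K]^n E →ₗ[K] TensorAlgebra K E)
          (TensorPower.toTensorAlgebra : ⨂[K]^n E' →ₗ[K] TensorAlgebra K E') := by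
  apply TensorProduct.ext
  apply PiTensorProduct.ext
  ext x y
  simp only [LinearMap.compMultilinearMap_apply, LinearMap.compr₂_apply, LinearMap.compr₂ₛₗ_apply, TensorProduct.mk_apply,
    LinearMap.comp_apply, TensorProduct.map_tmul]
  rw [tau_tmul]
  rw [TensorPower.toTensorAlgebra_tprod, TensorPower.toTensorAlgebra_tprod,
    TensorPower.toTensorAlgebra_tprod]
  simp only [AlgHom.toLinearMap_apply]
  rw [TensorAlgebra.tprod_apply, TensorAlgebra.tprod_apply, TensorAlgebra.tprod_apply]
  rw [map_list_prod]
  simp only [List.map_ofFn, Function.comp_def, tildeI_ι, TensorProduct.map_tmul]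
  exact listprod_tmul K _ _ _

lemma key_apply (n : ℕ) (z : (⨂[K]^n E) ⊗[K] (⨂[K]^n E')) :
    tildeI K E E' (TensorPower.toTensorAlgebra (tau K E E' n z))
      = TensorProduct.map
          (TensorPower.toTensorAlgebra : ⨂[K]^n E →ₗ[K] TensorAlgebra K E)
          (TensorPower.toTensorAlgebra : ⨂[K]^n E' →ₗ[K] TensorAlgebra K E') z :=
  LinearMap.congr_fun (key K E E' n) z

variable [FiniteDimensional K E] [FiniteDimensional K E']

lemma tau_surj (n : ℕ) : Function.Surjective (tau K E E' n) := by
  rw [← LinearMap.range_eq_top, eq_top_iff, ← PiTensorProduct.span_tprod_eq_top,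
    Submodule.span_le]
  rintro _ ⟨f, rfl⟩
  classical
  set b := Module.finBasis K E
  set b' := Module.finBasis K E'
  set bb := b.tensorProduct b' with hbb
  have hf : f = fun i => ∑ p : Fin (Module.finrank K E) × Fin (Module.finrank K E'),
      bb.repr (f i) p • bb p := funext fun i => (bb.sum_repr (f i)).symm
  rw [hf]
  rw [MultilinearMap.map_sum]
  refine Submodule.sum_mem _ fun r _ => ?_
  rw [MultilinearMap.map_smul_univ]
  refine Submodule.smul_mem _ _ ?_
  refine ⟨PiTensorProduct.tprod K (fun i => b (r i).1) ⊗ₜ[K]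
    PiTensorProduct.tprod K (fun i => b' (r i).2), ?_⟩
  rw [tau_tmul]
  congr 1
  funext i
  rw [hbb, Module.Basis.tensorProduct_apply']

lemma ofDirectSum_of {M : Type*} [AddCommGroup M] [Module K M] (n : ℕ) (w : ⨂[K]^n M) :
    TensorAlgebra.ofDirectSum (DirectSum.of (fun k => ⨂[K]^k M) n w)
      = TensorPower.toTensorAlgebra w := by
  have h : (TensorAlgebra.ofDirectSum.toLinearMap ∘ₗ DirectSum.lof K ℕ (fun k => ⨂[K]^k M) n)
      = (TensorPower.toTensorAlgebra : ⨂[K]^n M →ₗ[K] TensorAlgebra K M) := by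
    apply PiTensorProduct.ext
    ext f
    simp [DirectSum.lof_eq_of, TensorAlgebra.ofDirectSum_of_tprod,
      TensorPower.toTensorAlgebra_tprod]
  have := LinearMap.congr_fun h w
  simpa [DirectSum.lof_eq_of] using this

lemma iSup_range_toTA (M : Type*) [AddCommGroup M] [Module K M] :
    (⨆ n : ℕ, LinearMap.range
      (TensorPower.toTensorAlgebra : ⨂[K]^n M →ₗ[K] TensorAlgebra K M)) = ⊤ := by
  rw [eq_top_iff]
  rintro x -
  have hx : TensorAlgebra.ofDirectSum (TensorAlgebra.toDirectSum x) = x :=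
    TensorAlgebra.ofDirectSum_toDirectSum x
  rw [← hx]
  generalize (TensorAlgebra.toDirectSum x) = y
  induction y using DirectSum.induction_on with
  | zero => simp
  | of n w =>
    rw [ofDirectSum_of]
    exact Submodule.mem_iSup_of_mem n ⟨w, rfl⟩
  | add a b ha hb =>
    rw [map_add]
    exact add_mem ha hb

/-- The decomposition `T(E) ⊗ T(E') ≃ ⊕ₙ (⨂ⁿE ⊗ T(E'))`. -/
noncomputable def Phi :
    (TensorAlgebra K E ⊗[K] TensorAlgebra K E') ≃ₗ[K]
      ⨁ n, ((⨂[K]^n E) ⊗[K] TensorAlgebra K E') :=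
  (TensorProduct.congr (TensorAlgebra.equivDirectSum).toLinearEquiv
      (LinearEquiv.refl K (TensorAlgebra K E'))) ≪≫ₗ
    TensorProduct.directSumLeft K K (fun n => ⨂[K]^n E) (TensorAlgebra K E')

lemma Phi_map (n : ℕ) (z : (⨂[K]^n E) ⊗[K] (⨂[K]^n E')) :
    Phi K E E' (TensorProduct.map
        (TensorPower.toTensorAlgebra : ⨂[K]^n E →ₗ[K] TensorAlgebra K E)
        (TensorPower.toTensorAlgebra : ⨂[K]^n E' →ₗ[K] TensorAlgebra K E') z)
      = DirectSum.lof K ℕ (fun k => (⨂[K]^k E) ⊗[K] TensorAlgebra K E') n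
          (LinearMap.lTensor (⨂[K]^n E)
            (TensorPower.toTensorAlgebra : ⨂[K]^n E' →ₗ[K] TensorAlgebra K E') z) := by
  have h : (Phi K E E').toLinearMap ∘ₗ TensorProduct.map
        (TensorPower.toTensorAlgebra : ⨂[K]^n E →ₗ[K] TensorAlgebra K E)
        (TensorPower.toTensorAlgebra : ⨂[K]^n E' →ₗ[K] TensorAlgebra K E')
      = (DirectSum.lof K ℕ (fun k => (⨂[K]^k E) ⊗[K] TensorAlgebra K E') n) ∘ₗ
          LinearMap.lTensor (⨂[K]^n E)
            (TensorPower.toTensorAlgebra : ⨂[K]^n E' →ₗ[K] TensorAlgebra K E') := by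
    apply TensorProduct.ext'
    intro a b
    have h1 : TensorAlgebra.equivDirectSum.toLinearEquiv (TensorPower.toTensorAlgebra a)
        = DirectSum.lof K ℕ (fun k => ⨂[K]^k E) n a := by
      rw [DirectSum.lof_eq_of]
      simp only [AlgEquiv.toLinearEquiv_apply, TensorAlgebra.equivDirectSum_apply]
      exact toDirectSum_toTensorAlgebra K E n a
    simp only [LinearMap.comp_apply, TensorProduct.map_tmul, LinearMap.lTensor_tmul, Phi, LinearEquiv.coe_coe]
    rw [LinearEquiv.trans_apply, TensorProduct.congr_tmul]
    simp only [LinearEquiv.refl_apply, h1]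
    exact TensorProduct.directSumLeft_tmul_lof (M₁ := fun k => ⨂[K]^k E) (M₂' := TensorAlgebra K E') K K n a (TensorPower.toTensorAlgebra b)
  exact LinearMap.congr_fun h z

lemma tildeI_inj : Function.Injective (tildeI K E E') := by
  rw [injective_iff_map_eq_zero]
  intro x hx
  classical
  set y := TensorAlgebra.toDirectSum x with hy
  have hxy : TensorAlgebra.ofDirectSum y = x := TensorAlgebra.ofDirectSum_toDirectSum x
  choose z hz using fun n => tau_surj K E E' n (y n)
  -- compute Φ (tildeI x)
  have hsum : x = ∑ n ∈ y.support, TensorPower.toTensorAlgebra (tau K E E' n (z n)) := by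
    conv_lhs => rw [← hxy, ← DirectSum.sum_support_of y]
    rw [map_sum]
    refine Finset.sum_congr rfl fun n _ => ?_
    rw [ofDirectSum_of, hz]
  have h0 : (0 : ⨁ n, ((⨂[K]^n E) ⊗[K] TensorAlgebra K E'))
      = ∑ n ∈ y.support,
          DirectSum.lof K ℕ (fun k => (⨂[K]^k E) ⊗[K] TensorAlgebra K E') n
            (LinearMap.lTensor (⨂[K]^n E) TensorPower.toTensorAlgebra (z n)) := by
    have hPx : (Phi K E E').toLinearMap ((tildeI K E E') x) = 0 := by
      rw [hx]; exact map_zero _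
    rw [← hPx, hsum, map_sum, map_sum]
    refine Finset.sum_congr rfl fun n _ => ?_
    rw [key_apply]
    exact Phi_map K E E' n (z n)
  have hym : ∀ m, y m = 0 := by
    intro m
    by_cases hm : m ∈ y.support
    · have hcomp := congrArg
        (DirectSum.component K ℕ (fun k => (⨂[K]^k E) ⊗[K] TensorAlgebra K E') m) h0
      rw [map_zero, map_sum] at hcomp
      simp only [DirectSum.component.of, Finset.sum_dite_eq'] at hcomp
      rw [if_pos hm] at hcomp
      have hzm : z m = 0 := by
        have hinj : Function.Injective
            (LinearMap.lTensor (⨂[K]^m E)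
              (TensorPower.toTensorAlgebra : ⨂[K]^m E' →ₗ[K] TensorAlgebra K E')) :=
          Module.Flat.lTensor_preserves_injective_linearMap _ (toTA_inj K E' m)
        apply hinj
        rw [map_zero, ← hcomp]
      rw [← hz m, hzm, map_zero]
    · simpa using hm
  have : y = 0 := DFinsupp.ext hym
  rw [← hxy, this, map_zero]

end Statement2Aux

theorem statement2 (K : Type*) [Field K] (E E' : Type*)
    [AddCommGroup E] [Module K E] [AddCommGroup E'] [Module K E']
    [FiniteDimensional K E] [FiniteDimensional K E'] :
    Function.Injective (tildeI K E E') ∧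
    Subalgebra.toSubmodule (tildeI K E E').range =
      ⨆ n : ℕ, LinearMap.range
        (TensorProduct.map
          (TensorPower.toTensorAlgebra : ⨂[K]^n E →ₗ[K] TensorAlgebra K E)
          (TensorPower.toTensorAlgebra : ⨂[K]^n E' →ₗ[K] TensorAlgebra K E')) := by
  constructor
  · exact Statement2Aux.tildeI_inj K E E'
  · have h1 : Subalgebra.toSubmodule (tildeI K E E').range
        = LinearMap.range (tildeI K E E').toLinearMap := by
      ext x
      simp [Subalgebra.mem_toSubmodule]
    rw [h1, ← Submodule.map_top, ← Statement2Aux.iSup_range_toTA K (E ⊗[K] E'),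
      Submodule.map_iSup]
    refine iSup_congr fun n => ?_
    rw [← LinearMap.range_comp]
    rw [← LinearMap.range_comp_of_range_eq_top _
      (LinearMap.range_eq_top.mpr (Statement2Aux.tau_surj K E E' n))]
    rw [LinearMap.comp_assoc]
    exact congrArg LinearMap.range (Statement2Aux.key K E E' n)
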